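/- arXiv:1307.3832 — 2 statements merged into one kernel-verified Lean document; each statement's English description precedes it below -/
import Mathlib

section
/- For any effective set X, the structure El(X) is an effective set: the relation |u =_{El(X)} v| defined by the realisability conjunction of stability, unicity, existence, and equivalence is symmetric and transitive in the realisability sense. -/
open Nat.Partrec (Code)

/-- `φ_e(n)` : evaluation of the `e`-th partial recursive function. -/
def Phi (e n : ℕ) : Part ℕ := (Denumerable.ofNat Code e).eval n

/-- Realisability implication. -/
def rImp (F G : Set ℕ) : Set ℕ := {e | ∀ n ∈ F, ∃ m ∈ G, m ∈ Phi e n}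

/-- Realisability conjunction via pairing. -/
def rAnd (F G : Set ℕ) : Set ℕ := {k | ∃ n ∈ F, ∃ m ∈ G, k = Nat.pair n m}

/-- Realisability bi-implication. -/
def rIff (F G : Set ℕ) : Set ℕ := rAnd (rImp F G) (rImp G F)

/-- Realisability universal quantification (intersection). -/
def rAll {X : Type} (H : X → Set ℕ) : Set ℕ := ⋂ x, H x

/-- Realisability existential quantification (union). -/
def rEx {X : Type} (H : X → Set ℕ) : Set ℕ := ⋃ x, H x

/-- Realisability symmetry of a relation. -/
def IsSymm' {X : Type} (eqX : X → X → Set ℕ) : Prop :=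
  (rAll fun x => rAll fun y => rImp (eqX x y) (eqX y x)).Nonempty

/-- Realisability transitivity of a relation. -/
def IsTrans' {X : Type} (eqX : X → X → Set ℕ) : Prop :=
  (rAll fun x => rAll fun y => rAll fun z =>
    rImp (eqX x y) (rImp (eqX y z) (eqX x z))).Nonempty

/-- `eqX` makes its carrier an effective set. -/
def IsEff {X : Type} (eqX : X → X → Set ℕ) : Prop := IsSymm' eqX ∧ IsTrans' eqX

/-- Equality of `El(X)` : stability ∧ unicity ∧ existence ∧ equivalence. -/
def elEq {X : Type} (eqX : X → X → Set ℕ) (u v : X → Set ℕ) : Set ℕ :=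
  rAnd (rAll fun x => rAll fun x' => rImp (u x) (rImp (eqX x x') (u x')))
    (rAnd (rAll fun x => rAll fun x' => rImp (u x) (rImp (u x') (eqX x x')))
      (rAnd (rEx fun x => u x)
        (rAll fun x => rIff (u x) (v x))))

/-- Injection from the low level to the high level. -/
def el {X : Type} (eqX : X → X → Set ℕ) (x : X) : X → Set ℕ := fun y => eqX x y

/-! ### Auxiliary computability lemmas -/

lemma phi_partrec : Partrec₂ Phi :=
  Nat.Partrec.Code.eval_part.comp ((Computable.ofNat Code).comp Computable.fst) Computable.snd

lemma phi_realize {f : ℕ →. ℕ} (hf : Partrec f) : ∃ e, ∀ n, Phi e n = f n := by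
  obtain ⟨c, hc⟩ := Nat.Partrec.Code.exists_code.mp (Partrec.nat_iff.mp hf)
  exact ⟨Encodable.encode c, fun n => by simp [Phi, Denumerable.ofNat_encode, hc]⟩

lemma phi_index {g : ℕ → ℕ →. ℕ} (hg : Partrec₂ g) :
    ∃ e : ℕ → ℕ, Computable e ∧ ∀ k n, Phi (e k) n = g k n := by
  have h1 : Partrec fun n : ℕ => g n.unpair.1 n.unpair.2 := by
    exact Partrec₂.comp hg ((Primrec.fst.comp Primrec.unpair).to_comp)
      ((Primrec.snd.comp Primrec.unpair).to_comp)
  obtain ⟨c, hc⟩ := Nat.Partrec.Code.exists_code.mp (Partrec.nat_iff.mp h1)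
  refine ⟨fun k => Encodable.encode (c.curry k),
    (Primrec.encode.comp (Nat.Partrec.Code.primrec₂_curry.comp (Primrec.const c) Primrec.id)).to_comp,
    fun k n => ?_⟩
  simp [Phi, Denumerable.ofNat_encode, Nat.Partrec.Code.eval_curry, hc]

/-- A uniform family of codes for the "run `f1 k`, then `f2 k`, then postprocess" shape. -/
lemma shape_index (e3 : ℕ → ℕ) (he3 : Computable e3) {f1 f2 : ℕ → ℕ}
    (hf1 : Primrec f1) (hf2 : Primrec f2) {g : ℕ → ℕ → ℕ} (hg : Primrec₂ g) :
    ∃ E : ℕ → ℕ, Computable E ∧ ∀ k n,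
      Phi (E k) n = (Phi (f1 k) n).bind fun t => (Phi (f2 k) t).map fun r => e3 (g k r) := by
  apply phi_index
  refine Partrec.bind
    (Partrec₂.comp phi_partrec ((hf1.comp Primrec.fst).to_comp) Computable.snd) ?_
  refine Partrec.map
    (Partrec₂.comp phi_partrec ((hf2.comp (Primrec.fst.comp Primrec.fst)).to_comp)
      Computable.snd) ?_
  exact he3.comp (Computable₂.comp hg.to_comp
    (Computable.fst.comp (Computable.fst.comp Computable.fst)) Computable.snd)

/-! ### Component accessors for realizers of `elEq` -/

def kS (k : ℕ) : ℕ := k.unpair.1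
def kU (k : ℕ) : ℕ := k.unpair.2.unpair.1
def kE (k : ℕ) : ℕ := k.unpair.2.unpair.2.unpair.1
def kQ (k : ℕ) : ℕ := k.unpair.2.unpair.2.unpair.2
def kA (k : ℕ) : ℕ := (kQ k).unpair.1
def kB (k : ℕ) : ℕ := (kQ k).unpair.2

lemma kS_prim : Primrec kS := Primrec.fst.comp Primrec.unpair
lemma kU_prim : Primrec kU :=
  Primrec.fst.comp (Primrec.unpair.comp (Primrec.snd.comp Primrec.unpair))
lemma kQ_prim : Primrec kQ :=
  Primrec.snd.comp (Primrec.unpair.comp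
    (Primrec.snd.comp (Primrec.unpair.comp (Primrec.snd.comp Primrec.unpair))))
lemma kE_prim : Primrec kE :=
  Primrec.fst.comp (Primrec.unpair.comp
    (Primrec.snd.comp (Primrec.unpair.comp (Primrec.snd.comp Primrec.unpair))))
lemma kA_prim : Primrec kA := (Primrec.fst.comp Primrec.unpair).comp kQ_prim
lemma kB_prim : Primrec kB := (Primrec.snd.comp Primrec.unpair).comp kQ_prim

/-! ### Membership lemmas -/

lemma mem_rImp {F G : Set ℕ} {e : ℕ} :
    e ∈ rImp F G ↔ ∀ n ∈ F, ∃ m ∈ G, m ∈ Phi e n := Iff.rfl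

lemma rAnd_pair {A B : Set ℕ} {n m : ℕ} (hn : n ∈ A) (hm : m ∈ B) :
    Nat.pair n m ∈ rAnd A B := ⟨n, hn, m, hm, rfl⟩

lemma rAnd_fst {A B : Set ℕ} {k : ℕ} (h : k ∈ rAnd A B) : k.unpair.1 ∈ A := by
  obtain ⟨n, hn, m, hm, rfl⟩ := h; simpa using hn

lemma rAnd_snd {A B : Set ℕ} {k : ℕ} (h : k ∈ rAnd A B) : k.unpair.2 ∈ B := by
  obtain ⟨n, hn, m, hm, rfl⟩ := h; simpa using hm

lemma mem_rAll {X : Type} {H : X → Set ℕ} {k : ℕ} : k ∈ rAll H ↔ ∀ x, k ∈ H x :=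
  Set.mem_iInter

/-- Destructuring a realizer of `elEq`. -/
lemma elEq_dest {X : Type} {eqX : X → X → Set ℕ} {u v : X → Set ℕ} {k : ℕ}
    (h : k ∈ elEq eqX u v) :
    (∀ x x', kS k ∈ rImp (u x) (rImp (eqX x x') (u x'))) ∧
    (∀ x x', kU k ∈ rImp (u x) (rImp (u x') (eqX x x'))) ∧
    (∃ x, kE k ∈ u x) ∧
    (∀ x, kA k ∈ rImp (u x) (v x)) ∧
    (∀ x, kB k ∈ rImp (v x) (u x)) := by
  have h1 := rAnd_fst h
  have h2 := rAnd_fst (rAnd_snd h)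
  have h3 := rAnd_fst (rAnd_snd (rAnd_snd h))
  have h4 := rAnd_snd (rAnd_snd (rAnd_snd h))
  refine ⟨fun x x' => ?_, fun x x' => ?_, ?_, fun x => ?_, fun x => ?_⟩
  · exact mem_rAll.mp (mem_rAll.mp h1 x) x'
  · exact mem_rAll.mp (mem_rAll.mp h2 x) x'
  · exact Set.mem_iUnion.mp h3
  · exact rAnd_fst (mem_rAll.mp h4 x)
  · exact rAnd_snd (mem_rAll.mp h4 x)

/-- Building a realizer of `elEq`. -/
lemma elEq_intro {X : Type} {eqX : X → X → Set ℕ} {u v : X → Set ℕ}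
    {s un ex qa qb : ℕ}
    (h1 : ∀ x x', s ∈ rImp (u x) (rImp (eqX x x') (u x')))
    (h2 : ∀ x x', un ∈ rImp (u x) (rImp (u x') (eqX x x')))
    (h3 : ∃ x, ex ∈ u x)
    (h4 : ∀ x, qa ∈ rImp (u x) (v x))
    (h5 : ∀ x, qb ∈ rImp (v x) (u x)) :
    Nat.pair s (Nat.pair un (Nat.pair ex (Nat.pair qa qb))) ∈ elEq eqX u v := by
  refine rAnd_pair ?_ (rAnd_pair ?_ (rAnd_pair ?_ ?_))
  · exact mem_rAll.mpr fun x => mem_rAll.mpr fun x' => h1 x x'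
  · exact mem_rAll.mpr fun x => mem_rAll.mpr fun x' => h2 x x'
  · exact Set.mem_iUnion.mpr h3
  · exact mem_rAll.mpr fun x => rAnd_pair (h4 x) (h5 x)

theorem El_isEff {X : Type} (eqX : X → X → Set ℕ) (h : IsEff eqX) :
    IsEff (elEq eqX) := by
  classical
  -- composition codes: Phi (e3 (pair a b)) q = (Phi a q) >>= (Phi b)
  obtain ⟨e3, he3, he3spec⟩ := phi_index (g := fun d q => (Phi d.unpair.1 q).bind (Phi d.unpair.2))
    (Partrec.bind
      (Partrec₂.comp phi_partrec
        (((Primrec.fst.comp Primrec.unpair).comp Primrec.fst).to_comp) Computable.snd)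
      (Partrec₂.comp phi_partrec
        (((Primrec.snd.comp Primrec.unpair).comp (Primrec.fst.comp Primrec.fst)).to_comp)
        Computable.snd))
  have he3spec' : ∀ a b q, Phi (e3 (Nat.pair a b)) q = (Phi a q).bind (Phi b) := by
    intro a b q; rw [he3spec]; simp
  -- stability transfer codes
  obtain ⟨eS, heS, heSspec⟩ := shape_index e3 he3 kB_prim kS_prim
    (g := fun k r => Nat.pair r (kA k))
    (Primrec₂.natPair.comp Primrec.snd (kA_prim.comp Primrec.fst))
  -- unicity transfer codes
  obtain ⟨eU, heU, heUspec⟩ := shape_index e3 he3 kB_prim kU_prim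
    (g := fun k r => Nat.pair (kB k) r)
    (Primrec₂.natPair.comp (kB_prim.comp Primrec.fst) Primrec.snd)
  constructor
  · -- Symmetry
    obtain ⟨esym, hesym⟩ := phi_realize
      (f := fun k => (Phi (kA k) (kE k)).map fun m =>
        Nat.pair (eS k) (Nat.pair (eU k) (Nat.pair m (Nat.pair (kB k) (kA k)))))
      (by
        refine Partrec.map (Partrec₂.comp phi_partrec kA_prim.to_comp kE_prim.to_comp) ?_
        have natPairC : Computable₂ Nat.pair := Primrec₂.natPair.to_comp
        exact Computable₂.comp natPairC (heS.comp Computable.fst)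
          (Computable₂.comp natPairC (heU.comp Computable.fst)
            (Computable₂.comp natPairC Computable.snd
              (Computable₂.comp natPairC (kB_prim.to_comp.comp Computable.fst)
                (kA_prim.to_comp.comp Computable.fst)))))
    refine ⟨esym, mem_rAll.mpr fun u => mem_rAll.mpr fun v => ?_⟩
    rw [mem_rImp]
    intro k hk
    obtain ⟨hS, hU, ⟨x₀, hx₀⟩, hQA, hQB⟩ := elEq_dest hk
    obtain ⟨m, hmv, hmPhi⟩ := hQA x₀ (kE k) hx₀
    refine ⟨Nat.pair (eS k) (Nat.pair (eU k) (Nat.pair m (Nat.pair (kB k) (kA k)))), ?_, ?_⟩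
    · refine elEq_intro ?_ ?_ ⟨x₀, hmv⟩ hQB hQA
      · -- stability of v
        intro x x'
        rw [mem_rImp]
        intro n hn
        obtain ⟨t, htu, htPhi⟩ := hQB x n hn
        obtain ⟨r₁, hr₁, hr₁Phi⟩ := hS x x' t htu
        refine ⟨e3 (Nat.pair r₁ (kA k)), ?_, ?_⟩
        · rw [mem_rImp]
          intro q hq
          obtain ⟨p, hpu, hpPhi⟩ := hr₁ q hq
          obtain ⟨w, hwv, hwPhi⟩ := hQA x' p hpu
          exact ⟨w, hwv, by rw [he3spec']; exact Part.mem_bind_iff.mpr ⟨p, hpPhi, hwPhi⟩⟩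
        · rw [heSspec]
          exact Part.mem_bind_iff.mpr ⟨t, htPhi,
            (Part.mem_map_iff _).mpr ⟨r₁, hr₁Phi, rfl⟩⟩
      · -- unicity of v
        intro x x'
        rw [mem_rImp]
        intro n hn
        obtain ⟨t, htu, htPhi⟩ := hQB x n hn
        obtain ⟨r₂, hr₂, hr₂Phi⟩ := hU x x' t htu
        refine ⟨e3 (Nat.pair (kB k) r₂), ?_, ?_⟩
        · rw [mem_rImp]
          intro q hq
          obtain ⟨p, hpu, hpPhi⟩ := hQB x' q hq
          obtain ⟨w, hwe, hwPhi⟩ := hr₂ p hpu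
          exact ⟨w, hwe, by rw [he3spec']; exact Part.mem_bind_iff.mpr ⟨p, hpPhi, hwPhi⟩⟩
        · rw [heUspec]
          exact Part.mem_bind_iff.mpr ⟨t, htPhi,
            (Part.mem_map_iff _).mpr ⟨r₂, hr₂Phi, rfl⟩⟩
    · rw [hesym]
      exact (Part.mem_map_iff _).mpr ⟨m, hmPhi, rfl⟩
  · -- Transitivity
    have natPairC : Computable₂ Nat.pair := Primrec₂.natPair.to_comp
    obtain ⟨eT, heT, heTspec⟩ := phi_index
      (g := fun k₁ k₂ => (Part.some (Nat.pair (kS k₁) (Nat.pair (kU k₁)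
        (Nat.pair (kE k₁) (Nat.pair (e3 (Nat.pair (kA k₁) (kA k₂)))
          (e3 (Nat.pair (kB k₂) (kB k₁))))))) : Part ℕ))
      (Computable.partrec
        (Computable₂.comp natPairC (kS_prim.to_comp.comp Computable.fst)
          (Computable₂.comp natPairC (kU_prim.to_comp.comp Computable.fst)
            (Computable₂.comp natPairC (kE_prim.to_comp.comp Computable.fst)
              (Computable₂.comp natPairC
                (he3.comp (Computable₂.comp natPairC (kA_prim.to_comp.comp Computable.fst)
                  (kA_prim.to_comp.comp Computable.snd)))
                (he3.comp (Computable₂.comp natPairC (kB_prim.to_comp.comp Computable.snd)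
                  (kB_prim.to_comp.comp Computable.fst))))))))
    obtain ⟨et, hetspec⟩ := phi_realize (f := fun k => (Part.some (eT k) : Part ℕ))
      (Computable.partrec heT)
    refine ⟨et, mem_rAll.mpr fun u => mem_rAll.mpr fun v => mem_rAll.mpr fun w => ?_⟩
    rw [mem_rImp]
    intro k₁ hk₁
    obtain ⟨hS₁, hU₁, hE₁, hQA₁, hQB₁⟩ := elEq_dest hk₁
    refine ⟨eT k₁, ?_, by rw [hetspec]; exact Part.mem_some _⟩
    rw [mem_rImp]
    intro k₂ hk₂
    obtain ⟨hS₂, hU₂, hE₂, hQA₂, hQB₂⟩ := elEq_dest hk₂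
    refine ⟨_, elEq_intro hS₁ hU₁ hE₁ (fun x => ?_) (fun x => ?_),
      by rw [heTspec]; exact Part.mem_some _⟩
    · rw [mem_rImp]
      intro n hn
      obtain ⟨t, htv, htPhi⟩ := hQA₁ x n hn
      obtain ⟨m, hmw, hmPhi⟩ := hQA₂ x t htv
      exact ⟨m, hmw, by rw [he3spec']; exact Part.mem_bind_iff.mpr ⟨t, htPhi, hmPhi⟩⟩
    · rw [mem_rImp]
      intro n hn
      obtain ⟨t, htv, htPhi⟩ := hQB₂ x n hn
      obtain ⟨m, hmu, hmPhi⟩ := hQB₁ x t htv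
      exact ⟨m, hmu, by rw [he3spec']; exact Part.mem_bind_iff.mpr ⟨t, htPhi, hmPhi⟩⟩
end

section
/- For any effective set X: ⊨ ∀ u ∈ |El(X)|, |u =_{El(X)} u| ⇔ ∃ x ∈ |X|, |u =_{El(X)} el_X(x)|, i.e. an element of El(X) is self-equal exactly when it is (realisably) of the form el_X(x). -/
open Nat.Partrec (Code)

namespace ElAux

open Nat.Partrec.Code

theorem Phi_partrec : Partrec₂ Phi :=
  eval_part.comp ((Computable.ofNat Code).comp Computable.fst) Computable.snd

theorem step_partrec : Nat.Partrec fun q : ℕ =>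
    (Phi q.unpair.1.unpair.1 q.unpair.1.unpair.2).bind fun r => Phi r q.unpair.2 := by
  apply Partrec.nat_iff.1
  apply Partrec.bind
  · exact Phi_partrec.comp
      (Computable.fst.comp (Computable.unpair.comp (Computable.fst.comp Computable.unpair)))
      (Computable.snd.comp (Computable.unpair.comp (Computable.fst.comp Computable.unpair)))
  · exact Phi_partrec.comp Computable.snd
      ((Computable.snd.comp Computable.unpair).comp Computable.fst)

noncomputable def U : Code := (exists_code.1 step_partrec).choose

/-- `mkF t ex` is a code for `a ↦ Phi t ex >>= fun r => Phi r a`. -/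
noncomputable def mkF (t ex : ℕ) : ℕ := Encodable.encode (U.curry (Nat.pair t ex))

theorem mkF_eval (t ex a : ℕ) :
    Phi (mkF t ex) a = (Phi t ex).bind fun r => Phi r a := by
  have h := (exists_code.1 step_partrec).choose_spec
  rw [mkF]
  show eval (Denumerable.ofNat Code _) a = _
  rw [Denumerable.ofNat_encode, eval_curry]
  simpa [U] using congrFun h (Nat.pair (Nat.pair t ex) a)

theorem mkF_primrec : Primrec₂ mkF :=
  Primrec.encode.comp (primrec₂_curry.comp (Primrec.const U)
    (Primrec₂.natPair.comp Primrec.fst Primrec.snd))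

/-- A code for the identity. -/
noncomputable def I : ℕ :=
  Encodable.encode (exists_code.1 (Partrec.nat_iff.1 Computable.id)).choose

theorem I_eval (a : ℕ) : Phi I a = Part.some a := by
  have h := (exists_code.1 (Partrec.nat_iff.1 (@Computable.id ℕ _))).choose_spec
  rw [I]
  show eval (Denumerable.ofNat Code _) a = _
  rw [Denumerable.ofNat_encode]
  simpa using congrFun h a

noncomputable def F₁ (n : ℕ) : ℕ :=
  Nat.pair n.unpair.1 (Nat.pair n.unpair.2.unpair.1
    (Nat.pair n.unpair.2.unpair.2.unpair.1
      (Nat.pair (mkF n.unpair.2.unpair.1 n.unpair.2.unpair.2.unpair.1)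
        (mkF n.unpair.1 n.unpair.2.unpair.2.unpair.1))))

noncomputable def F₂ (n : ℕ) : ℕ :=
  Nat.pair n.unpair.1 (Nat.pair n.unpair.2.unpair.1
    (Nat.pair n.unpair.2.unpair.2.unpair.1 (Nat.pair I I)))

theorem F₁_primrec : Primrec F₁ := by
  have hs : Primrec fun n : ℕ => n.unpair.1 := Primrec.fst.comp Primrec.unpair
  have ht : Primrec fun n : ℕ => n.unpair.2.unpair.1 :=
    Primrec.fst.comp (Primrec.unpair.comp (Primrec.snd.comp Primrec.unpair))
  have hex : Primrec fun n : ℕ => n.unpair.2.unpair.2.unpair.1 :=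
    Primrec.fst.comp (Primrec.unpair.comp (Primrec.snd.comp
      (Primrec.unpair.comp (Primrec.snd.comp Primrec.unpair))))
  exact Primrec₂.natPair.comp hs (Primrec₂.natPair.comp ht
    (Primrec₂.natPair.comp hex (Primrec₂.natPair.comp
      (mkF_primrec.comp ht hex) (mkF_primrec.comp hs hex))))

theorem F₂_primrec : Primrec F₂ := by
  have hs : Primrec fun n : ℕ => n.unpair.1 := Primrec.fst.comp Primrec.unpair
  have ht : Primrec fun n : ℕ => n.unpair.2.unpair.1 :=
    Primrec.fst.comp (Primrec.unpair.comp (Primrec.snd.comp Primrec.unpair))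
  have hex : Primrec fun n : ℕ => n.unpair.2.unpair.2.unpair.1 :=
    Primrec.fst.comp (Primrec.unpair.comp (Primrec.snd.comp
      (Primrec.unpair.comp (Primrec.snd.comp Primrec.unpair))))
  exact Primrec₂.natPair.comp hs (Primrec₂.natPair.comp ht
    (Primrec₂.natPair.comp hex (Primrec.const (Nat.pair I I))))

noncomputable def e₁ : ℕ :=
  Encodable.encode (exists_code.1 (Partrec.nat_iff.1 F₁_primrec.to_comp.partrec)).choose

theorem e₁_eval (n : ℕ) : Phi e₁ n = Part.some (F₁ n) := by
  have h := (exists_code.1 (Partrec.nat_iff.1 F₁_primrec.to_comp.partrec)).choose_spec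
  rw [e₁]
  show eval (Denumerable.ofNat Code _) n = _
  rw [Denumerable.ofNat_encode]
  simpa using congrFun h n

noncomputable def e₂ : ℕ :=
  Encodable.encode (exists_code.1 (Partrec.nat_iff.1 F₂_primrec.to_comp.partrec)).choose

theorem e₂_eval (n : ℕ) : Phi e₂ n = Part.some (F₂ n) := by
  have h := (exists_code.1 (Partrec.nat_iff.1 F₂_primrec.to_comp.partrec)).choose_spec
  rw [e₂]
  show eval (Denumerable.ofNat Code _) n = _
  rw [Denumerable.ofNat_encode]
  simpa using congrFun h n

end ElAux

open ElAux in
theorem elEq_self_iff_exists_el {X : Type} (eqX : X → X → Set ℕ) (h : IsEff eqX) :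
    (rAll fun u : X → Set ℕ =>
      rIff (elEq eqX u u) (rEx fun x : X => elEq eqX u (el eqX x))).Nonempty := by
  clear h
  refine ⟨Nat.pair e₁ e₂, Set.mem_iInter.2 fun u => ?_⟩
  refine ⟨e₁, ?_, e₂, ?_, rfl⟩
  · -- forward
    rintro n ⟨s, hs, -, ⟨t, ht, -, ⟨ex, hex, d, hd, rfl⟩, rfl⟩, rfl⟩
    obtain ⟨x₀, hx₀⟩ := Set.mem_iUnion.1 hex
    refine ⟨F₁ (Nat.pair s (Nat.pair t (Nat.pair ex d))), ?_, ?_⟩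
    · refine Set.mem_iUnion.2 ⟨x₀, ?_⟩
      simp only [F₁, Nat.unpair_pair]
      refine ⟨s, hs, _, ⟨t, ht, _, ⟨ex, hex, Nat.pair (mkF t ex) (mkF s ex), ?_, rfl⟩,
        rfl⟩, rfl⟩
      refine Set.mem_iInter.2 fun x => ⟨mkF t ex, ?_, mkF s ex, ?_, rfl⟩
      · intro a ha
        have ht' := Set.mem_iInter.1 (Set.mem_iInter.1 ht x₀) x
        obtain ⟨r, hr, hrt⟩ := ht' ex hx₀
        obtain ⟨m, hm, hmr⟩ := hr a ha
        exact ⟨m, hm, by rw [mkF_eval]; exact Part.mem_bind_iff.2 ⟨r, hrt, hmr⟩⟩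
      · intro a ha
        have hs' := Set.mem_iInter.1 (Set.mem_iInter.1 hs x₀) x
        obtain ⟨r, hr, hrs⟩ := hs' ex hx₀
        obtain ⟨m, hm, hmr⟩ := hr a ha
        exact ⟨m, hm, by rw [mkF_eval]; exact Part.mem_bind_iff.2 ⟨r, hrs, hmr⟩⟩
    · rw [e₁_eval]; exact Part.mem_some _
  · -- backward
    intro n hn
    obtain ⟨x₀, hx₀⟩ := Set.mem_iUnion.1 hn
    obtain ⟨s, hs, -, ⟨t, ht, -, ⟨ex, hex, d, -, rfl⟩, rfl⟩, rfl⟩ := hx₀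
    refine ⟨F₂ (Nat.pair s (Nat.pair t (Nat.pair ex d))), ?_, ?_⟩
    · simp only [F₂, Nat.unpair_pair]
      refine ⟨s, hs, _, ⟨t, ht, _, ⟨ex, hex, Nat.pair I I, ?_, rfl⟩, rfl⟩, rfl⟩
      refine Set.mem_iInter.2 fun x => ⟨I, ?_, I, ?_, rfl⟩ <;>
        exact fun a ha => ⟨a, ha, by rw [I_eval]; exact Part.mem_some _⟩
    · rw [e₂_eval]; exact Part.mem_some _
end
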